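/- arXiv:1603.05499 — 7 statements merged into one kernel-verified Lean document; each statement's English description precedes it below -/
import Mathlib

section
/- Consider the PID-controlled second-order system on ℝⁿ: trajectories x, ξ, u_I : ℝ → ℝⁿ satisfying x'(t) = ξ(t), ξ'(t) = b·ξ(t) + u(t) + u_B(x(t)) with u(t) = −k_P ∇φ(x(t)) − k_D ξ(t) + k_I u_I(t), and u_I'(t) = −k_P ∇φ(x(t)) − k_D ξ(t), where b, k_P, k_D, k_I, β are reals with k_P > 0, φ : ℝⁿ → ℝ is continuously differentiable, and u_B : ℝⁿ → ℝⁿ is continuously differentiable with derivative (Jacobian) Du_B. Define V(t) = φ(x(t)) + (1/(2k_P))‖ξ(t)‖² + (β/2)‖k_I(u_I(t) − ξ(t)) + u_B(x(t))‖². Then along any such trajectory, writing z(t) = k_I(u_I(t) − ξ(t)) + u_B(x(t)), the derivative of V satisfies V'(t) = −β k_I ‖z(t)‖² − ((k_D − k_I − b)/k_P) ‖ξ(t)‖² + ⟨z(t), [ (1/k_P − (b + k_I) β k_I)·I + β·Du_B(x(t)) ] ξ(t)⟩. -/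
/-!
With `z = k_I (u_I - ξ) + u_B ∘ x`, the dynamics close up in the variables `(∇φ(x), ξ, z)`:
`ξ' = (b - k_D + k_I) ξ - k_P ∇φ(x) + z` and `z' = -k_I z - k_I (b + k_I) ξ + Du_B(x) ξ`.
Differentiating the three terms of `V` and substituting these, the cross terms `⟨∇φ(x), ξ⟩`
from the potential and the kinetic term cancel, and what remains is a quadratic form in `(ξ, z)`.
-/

open scoped RealInnerProductSpace

variable {E : Type*} [NormedAddCommGroup E] [InnerProductSpace ℝ E]

theorem DifferentiableAt.hasDerivAt_comp_inner_gradient [CompleteSpace E] {φ : E → ℝ}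
    {x : ℝ → E} {v : E} {t : ℝ} (hφ : DifferentiableAt ℝ φ (x t)) (hx : HasDerivAt x v t) :
    HasDerivAt (fun s => φ (x s)) ⟪gradient φ (x t), v⟫ t := by
  rw [inner_gradient_left]
  exact hφ.hasFDerivAt.comp_hasDerivAt t hx

theorem pid_lyapunov_rate_eq {kP : ℝ} (hkP : kP ≠ 0) (b kD kI β : ℝ) (g ξ z w : E) :
    ⟪g, ξ⟫ + 1 / (2 * kP) * (2 * ⟪ξ, (b - kD + kI) • ξ - kP • g + z⟫)
        + β / 2 * (2 * ⟪z, (-kI) • z - (kI * (b + kI)) • ξ + w⟫)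
      = -(β * kI) * ‖z‖ ^ 2 - ((kD - kI - b) / kP) * ‖ξ‖ ^ 2
        + ⟪z, (1 / kP - (b + kI) * β * kI) • ξ + β • w⟫ := by
  simp only [inner_add_right, inner_sub_right, real_inner_smul_right,
    real_inner_self_eq_norm_sq]
  rw [real_inner_comm ξ z, real_inner_comm ξ g]
  field_simp
  ring

/-- Lyapunov derivative computation for the PID-controlled
second-order system on ℝⁿ with state-dependent input bias. -/
theorem pid_lyapunov_derivative
    (n : ℕ) (b kP kD kI β : ℝ) (hkP : 0 < kP)
    (φ : EuclideanSpace ℝ (Fin n) → ℝ) (hφ : ContDiff ℝ 1 φ)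
    (uB : EuclideanSpace ℝ (Fin n) → EuclideanSpace ℝ (Fin n)) (huB : ContDiff ℝ 1 uB)
    (x ξ uI : ℝ → EuclideanSpace ℝ (Fin n))
    (u : ℝ → EuclideanSpace ℝ (Fin n))
    (hu : ∀ t, u t = -(kP • gradient φ (x t)) - kD • ξ t + kI • uI t)
    (hx : ∀ t, HasDerivAt x (ξ t) t)
    (hξ : ∀ t, HasDerivAt ξ (b • ξ t + u t + uB (x t)) t)
    (huI : ∀ t, HasDerivAt uI (-(kP • gradient φ (x t)) - kD • ξ t) t)
    (V : ℝ → ℝ)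
    (hV : ∀ t, V t = φ (x t) + (1 / (2 * kP)) * ‖ξ t‖ ^ 2
        + (β / 2) * ‖kI • (uI t - ξ t) + uB (x t)‖ ^ 2)
    (z : ℝ → EuclideanSpace ℝ (Fin n))
    (hz : ∀ t, z t = kI • (uI t - ξ t) + uB (x t)) :
    ∀ t, HasDerivAt V
      (-(β * kI) * ‖z t‖ ^ 2 - ((kD - kI - b) / kP) * ‖ξ t‖ ^ 2
        + ⟪z t, (1 / kP - (b + kI) * β * kI) • ξ t + β • fderiv ℝ uB (x t) (ξ t)⟫) t := by
  intro t
  have hφx := (hφ.differentiable one_ne_zero).differentiableAt.hasDerivAt_comp_inner_gradient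
    (hx t)
  have hξ' : HasDerivAt ξ ((b - kD + kI) • ξ t - kP • gradient φ (x t) + z t) t := by
    refine (hξ t).congr_deriv ?_
    rw [hu, hz]
    module
  have hz' : HasDerivAt z
      ((-kI) • z t - (kI * (b + kI)) • ξ t + fderiv ℝ uB (x t) (ξ t)) t := by
    have hsum := (((huI t).sub (hξ t)).const_smul kI).add
      ((huB.differentiable one_ne_zero).differentiableAt.hasFDerivAt.comp_hasDerivAt t (hx t))
    rw [show kI • (uI - ξ) + uB ∘ x = z from (funext hz).symm] at hsum
    refine hsum.congr_deriv ?_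
    rw [hu, hz]
    module
  have hVz : V = fun s => φ (x s) + 1 / (2 * kP) * ‖ξ s‖ ^ 2 + β / 2 * ‖z s‖ ^ 2 :=
    funext fun s => by rw [hV, hz]
  rw [hVz, ← pid_lyapunov_rate_eq hkP.ne']
  exact (hφx.add (hξ'.norm_sq.const_mul _)).add (hz'.norm_sq.const_mul _)
end

section
/- Consider the PID-controlled second-order system on ℝⁿ: trajectories x, ξ, u_I : ℝ → ℝⁿ satisfying x'(t) = ξ(t), ξ'(t) = b·ξ(t) + u(t) + u_B(x(t)) with u(t) = −k_P ∇φ(x(t)) − k_D ξ(t) + k_I u_I(t), and u_I'(t) = −k_P ∇φ(x(t)) − k_D ξ(t), where b, k_P, k_D, k_I, β are reals with k_P > 0, β > 0, k_I > 0, φ : ℝⁿ → ℝ is continuously differentiable, and u_B : ℝⁿ → ℝⁿ is continuously differentiable. Set a₁ = β k_I, a₂ = (k_D − b − k_I)/k_P, and for each point p ∈ ℝⁿ let A(p) = (1/(2k_P) − (b + k_I) β k_I / 2)·I + (β/2)·Du_B(p). Suppose that for all p ∈ ℝⁿ, a₁ is strictly greater than every row absolute sum of A(p) and a₂ is strictly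 greater than every column absolute sum of A(p). Then along any such trajectory, with V(t) = φ(x(t)) + (1/(2k_P))‖ξ(t)‖² + (β/2)‖k_I(u_I(t) − ξ(t)) + u_B(x(t))‖² and z(t) = k_I(u_I(t) − ξ(t)) + u_B(x(t)), one has V'(t) ≤ 0 for all t, and V'(t) = 0 if and only if ξ(t) = 0 and z(t) = 0. -/
/-!
Along the closed loop the gradient terms cancel in `V'`, leaving
`V' = 2 ⟪z, A ξ⟫ - β kI ‖z‖² - a₂ ‖ξ‖²`. Bounding each `2 zᵢ Aᵢⱼ ξⱼ` by `|Aᵢⱼ| (zᵢ² + ξⱼ²)`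
turns the cross term into row sums of `|A|` weighted by `zᵢ²` plus column sums weighted by `ξⱼ²`,
so the strict Gershgorin-type gain conditions make `V'` negative unless `z = ξ = 0`.
-/

open scoped RealInnerProductSpace Matrix

namespace Matrix

variable {ι κ : Type*} [Fintype ι] [Fintype κ]

theorem sum_mul_sq_le_mul_dotProduct_self {c : ι → ℝ} {a : ℝ} (hc : ∀ i, c i ≤ a)
    (v : ι → ℝ) : ∑ i, c i * v i ^ 2 ≤ a * (v ⬝ᵥ v) := by
  simp only [dotProduct, ← sq, Finset.mul_sum]
  exact Finset.sum_le_sum fun i _ => mul_le_mul_of_nonneg_right (hc i) (sq_nonneg _)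

theorem sum_mul_sq_lt_mul_dotProduct_self {c : ι → ℝ} {a : ℝ} (hc : ∀ i, c i < a)
    {v : ι → ℝ} (hv : v ≠ 0) : ∑ i, c i * v i ^ 2 < a * (v ⬝ᵥ v) := by
  obtain ⟨k, hk⟩ := Function.ne_iff.mp hv
  simp only [dotProduct, ← sq, Finset.mul_sum]
  refine Finset.sum_lt_sum (fun i _ => ?_) ⟨k, Finset.mem_univ k, ?_⟩
  · exact mul_le_mul_of_nonneg_right (hc i).le (sq_nonneg _)
  · exact mul_lt_mul_of_pos_right (hc k) (sq_pos_of_ne_zero hk)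

theorem two_mul_dotProduct_mulVec_le_sum_abs (M : Matrix ι κ ℝ) (ζ : ι → ℝ) (η : κ → ℝ) :
    2 * (ζ ⬝ᵥ M *ᵥ η) ≤
      ∑ i, (∑ j, |M i j|) * ζ i ^ 2 + ∑ j, (∑ i, |M i j|) * η j ^ 2 := by
  have hterm : ∀ i j, 2 * (ζ i * (M i j * η j)) ≤ |M i j| * ζ i ^ 2 + |M i j| * η j ^ 2 := by
    intro i j
    have habs : ζ i * (M i j * η j) ≤ |M i j| * (|ζ i| * |η j|) := by
      rw [← abs_mul, ← abs_mul]
      exact (le_abs_self _).trans_eq (by ring_nf)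
    rw [← sq_abs (ζ i), ← sq_abs (η j)]
    nlinarith [mul_nonneg (abs_nonneg (M i j)) (sq_nonneg (|ζ i| - |η j|))]
  calc 2 * (ζ ⬝ᵥ M *ᵥ η) = ∑ i, ∑ j, 2 * (ζ i * (M i j * η j)) := by
        simp only [dotProduct, mulVec, Finset.mul_sum]
    _ ≤ ∑ i, ∑ j, (|M i j| * ζ i ^ 2 + |M i j| * η j ^ 2) :=
        Finset.sum_le_sum fun i _ => Finset.sum_le_sum fun j _ => hterm i j
    _ = ∑ i, (∑ j, |M i j|) * ζ i ^ 2 + ∑ j, (∑ i, |M i j|) * η j ^ 2 := by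
        simp only [Finset.sum_add_distrib, Finset.sum_mul]
        rw [Finset.sum_comm (f := fun i j => |M i j| * η j ^ 2)]

variable {M : Matrix ι κ ℝ} {a₁ a₂ : ℝ}

theorem two_mul_dotProduct_mulVec_le (hr : ∀ i, ∑ j, |M i j| ≤ a₁)
    (hc : ∀ j, ∑ i, |M i j| ≤ a₂) (ζ : ι → ℝ) (η : κ → ℝ) :
    2 * (ζ ⬝ᵥ M *ᵥ η) ≤ a₁ * (ζ ⬝ᵥ ζ) + a₂ * (η ⬝ᵥ η) :=
  (two_mul_dotProduct_mulVec_le_sum_abs M ζ η).trans <|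
    add_le_add (sum_mul_sq_le_mul_dotProduct_self hr ζ) (sum_mul_sq_le_mul_dotProduct_self hc η)

theorem two_mul_dotProduct_mulVec_eq_iff (hr : ∀ i, ∑ j, |M i j| < a₁)
    (hc : ∀ j, ∑ i, |M i j| < a₂) {ζ : ι → ℝ} {η : κ → ℝ} :
    2 * (ζ ⬝ᵥ M *ᵥ η) = a₁ * (ζ ⬝ᵥ ζ) + a₂ * (η ⬝ᵥ η) ↔ ζ = 0 ∧ η = 0 := by
  refine ⟨fun h => ?_, fun ⟨hζ, hη⟩ => by simp [hζ, hη]⟩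
  have hbound := two_mul_dotProduct_mulVec_le_sum_abs M ζ η
  have hζ := sum_mul_sq_le_mul_dotProduct_self (fun i => (hr i).le) ζ
  have hη := sum_mul_sq_le_mul_dotProduct_self (fun j => (hc j).le) η
  by_contra hne
  rcases not_and_or.mp hne with hζ0 | hη0
  · linarith [sum_mul_sq_lt_mul_dotProduct_self hr hζ0]
  · linarith [sum_mul_sq_lt_mul_dotProduct_self hc hη0]

end Matrix

namespace EuclideanSpace

variable {ι κ F : Type*}

theorem real_inner_eq_dotProduct [Fintype ι] (x y : EuclideanSpace ℝ ι) :
    ⟪x, y⟫ = x.ofLp ⬝ᵥ y.ofLp := by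
  simp [inner_eq_star_dotProduct, dotProduct_comm]

theorem of_apply_single_mulVec [Fintype κ] [DecidableEq κ]
    [FunLike F (EuclideanSpace ℝ κ) (EuclideanSpace ℝ ι)]
    [LinearMapClass F ℝ (EuclideanSpace ℝ κ) (EuclideanSpace ℝ ι)] (L : F)
    (v : EuclideanSpace ℝ κ) :
    Matrix.of (fun i j => L (single j 1) i) *ᵥ v.ofLp = (L v).ofLp := by
  conv_rhs => rw [← (basisFun κ ℝ).toBasis.sum_repr v]
  ext i
  simp [Matrix.mulVec, dotProduct, mul_comm]

theorem real_inner_smul_add_smul_eq_dotProduct_mulVec [Fintype ι] [DecidableEq ι]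
    [FunLike F (EuclideanSpace ℝ ι) (EuclideanSpace ℝ ι)]
    [LinearMapClass F ℝ (EuclideanSpace ℝ ι) (EuclideanSpace ℝ ι)] {L : F} {c d : ℝ}
    {M : Matrix ι ι ℝ}
    (hM : ∀ i j, M i j = (if i = j then c else 0) + d * L (single j 1) i)
    (w v : EuclideanSpace ℝ ι) :
    ⟪w, c • v + d • L v⟫ = w.ofLp ⬝ᵥ M *ᵥ v.ofLp := by
  have hM' : M = c • 1 + d • Matrix.of (fun i j => L (single j 1) i) := by
    ext i j; simp [hM, Matrix.one_apply]
  rw [real_inner_eq_dotProduct, hM', Matrix.add_mulVec, Matrix.smul_mulVec, Matrix.smul_mulVec,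
    Matrix.one_mulVec, of_apply_single_mulVec]
  rfl

end EuclideanSpace

theorem HasGradientAt.comp_hasDerivAt {E : Type*} [NormedAddCommGroup E]
    [InnerProductSpace ℝ E] [CompleteSpace E] {f : E → ℝ} {g v : E} {x : ℝ → E} {t : ℝ}
    (hf : HasGradientAt f g (x t)) (hx : HasDerivAt x v t) :
    HasDerivAt (fun s => f (x s)) ⟪g, v⟫ t :=
  hf.hasFDerivAt.comp_hasDerivAt t hx

/-- Along the closed loop, `ξ' = -kP ∇φ + (b - kD + kI) ξ + z` and
`z' = -kI z - kI (b + kI) ξ + DuB ξ`: the gradient terms cancel in `V'`. -/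
theorem pid_lyapunov_deriv_eq {E : Type*} [NormedAddCommGroup E] [InnerProductSpace ℝ E]
    {b kP kD kI β : ℝ} (hkP : kP ≠ 0) {g ξ uI u w z D : E}
    (hu : u = -(kP • g) - kD • ξ + kI • uI) (hz : z = kI • (uI - ξ) + w) :
    ⟪g, ξ⟫ + 1 / (2 * kP) * (2 * ⟪ξ, b • ξ + u + w⟫)
        + β / 2 * (2 * ⟪z, kI • ((-(kP • g) - kD • ξ) - (b • ξ + u + w)) + D⟫)
      = 2 * ⟪z, (1 / (2 * kP) - (b + kI) * β * kI / 2) • ξ + (β / 2) • D⟫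
        - (β * kI * ‖z‖ ^ 2 + (kD - b - kI) / kP * ‖ξ‖ ^ 2) := by
  have hξ' : b • ξ + u + w = -(kP • g) + (b - kD + kI) • ξ + z := by
    rw [hu, hz]; module
  have hz' : kI • ((-(kP • g) - kD • ξ) - (b • ξ + u + w))
      = (-kI) • z + (-(kI * (b + kI))) • ξ := by
    rw [hu, hz]; module
  rw [hz', hξ', ← real_inner_self_eq_norm_sq, ← real_inner_self_eq_norm_sq]
  simp only [inner_add_right, real_inner_smul_right, inner_neg_right, real_inner_comm ξ g,
    real_inner_comm ξ z]
  field_simp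
  ring

theorem pid_lyapunov_decrease_general
    (n : ℕ) (b kP kD kI β : ℝ) (hkP : 0 < kP)
    (φ : EuclideanSpace ℝ (Fin n) → ℝ) (hφ : ContDiff ℝ 1 φ)
    (uB : EuclideanSpace ℝ (Fin n) → EuclideanSpace ℝ (Fin n)) (huB : ContDiff ℝ 1 uB)
    (a₁ a₂ : ℝ) (ha₁ : a₁ = β * kI) (ha₂ : a₂ = (kD - b - kI) / kP)
    (A : EuclideanSpace ℝ (Fin n) → Matrix (Fin n) (Fin n) ℝ)
    (hA : ∀ p i j, A p i j = (if i = j then 1 / (2 * kP) - (b + kI) * β * kI / 2 else 0)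
        + (β / 2) * fderiv ℝ uB p (EuclideanSpace.single j 1) i)
    (hrow : ∀ p : EuclideanSpace ℝ (Fin n), ∀ i : Fin n, a₁ > ∑ j : Fin n, |A p i j|)
    (hcol : ∀ p : EuclideanSpace ℝ (Fin n), ∀ j : Fin n, a₂ > ∑ i : Fin n, |A p i j|)
    (x ξ uI : ℝ → EuclideanSpace ℝ (Fin n))
    (u : ℝ → EuclideanSpace ℝ (Fin n))
    (hu : ∀ t, u t = -(kP • gradient φ (x t)) - kD • ξ t + kI • uI t)
    (hx : ∀ t, HasDerivAt x (ξ t) t)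
    (hξ : ∀ t, HasDerivAt ξ (b • ξ t + u t + uB (x t)) t)
    (huI : ∀ t, HasDerivAt uI (-(kP • gradient φ (x t)) - kD • ξ t) t)
    (V : ℝ → ℝ)
    (hV : ∀ t, V t = φ (x t) + (1 / (2 * kP)) * ‖ξ t‖ ^ 2
        + (β / 2) * ‖kI • (uI t - ξ t) + uB (x t)‖ ^ 2)
    (z : ℝ → EuclideanSpace ℝ (Fin n))
    (hz : ∀ t, z t = kI • (uI t - ξ t) + uB (x t)) :
    ∀ t, deriv V t ≤ 0 ∧ (deriv V t = 0 ↔ ξ t = 0 ∧ z t = 0) := by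
  intro t
  have hφx := (hφ.differentiable one_ne_zero (x t)).hasGradientAt.comp_hasDerivAt (hx t)
  have hz' : HasDerivAt z (kI • ((-(kP • gradient φ (x t)) - kD • ξ t)
      - (b • ξ t + u t + uB (x t))) + fderiv ℝ uB (x t) (ξ t)) t := by
    rw [funext hz]
    exact (((huI t).sub (hξ t)).const_smul kI).add
      ((huB.differentiable one_ne_zero (x t)).hasFDerivAt.comp_hasDerivAt t (hx t))
  have hVeq : V = fun s => φ (x s) + 1 / (2 * kP) * ‖ξ s‖ ^ 2 + β / 2 * ‖z s‖ ^ 2 :=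
    funext fun s => by rw [hV, hz]
  have hV' := (hφx.fun_add ((hξ t).norm_sq.const_mul (1 / (2 * kP)))).fun_add
    (hz'.norm_sq.const_mul (β / 2))
  rw [hVeq, hV'.deriv, pid_lyapunov_deriv_eq hkP.ne' (hu t) (hz t), ← ha₁, ← ha₂,
    EuclideanSpace.real_inner_smul_add_smul_eq_dotProduct_mulVec (hA (x t)),
    ← real_inner_self_eq_norm_sq, ← real_inner_self_eq_norm_sq,
    EuclideanSpace.real_inner_eq_dotProduct, EuclideanSpace.real_inner_eq_dotProduct,
    sub_nonpos, sub_eq_zero, Matrix.two_mul_dotProduct_mulVec_eq_iff (hrow (x t)) (hcol (x t))]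
  refine ⟨Matrix.two_mul_dotProduct_mulVec_le (fun i => (hrow (x t) i).le)
    (fun j => (hcol (x t) j).le) _ _, ?_⟩
  simp only [WithLp.ofLp_eq_zero, and_comm]

/-- decrease of the Lyapunov function for the PID-controlled
second-order system on ℝⁿ with state-dependent bias, under Gershgorin-type
gain conditions; the derivative vanishes iff both the velocity and the
integral-error variable vanish. -/
theorem pid_lyapunov_decrease
    (n : ℕ) (b kP kD kI β : ℝ) (hkP : 0 < kP) (hβ : 0 < β) (hkI : 0 < kI)
    (φ : EuclideanSpace ℝ (Fin n) → ℝ) (hφ : ContDiff ℝ 1 φ)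
    (uB : EuclideanSpace ℝ (Fin n) → EuclideanSpace ℝ (Fin n)) (huB : ContDiff ℝ 1 uB)
    (a₁ a₂ : ℝ) (ha₁ : a₁ = β * kI) (ha₂ : a₂ = (kD - b - kI) / kP)
    (A : EuclideanSpace ℝ (Fin n) → Matrix (Fin n) (Fin n) ℝ)
    (hA : ∀ p i j, A p i j = (if i = j then 1 / (2 * kP) - (b + kI) * β * kI / 2 else 0)
        + (β / 2) * fderiv ℝ uB p (EuclideanSpace.single j 1) i)
    (hrow : ∀ p : EuclideanSpace ℝ (Fin n), ∀ i : Fin n, a₁ > ∑ j : Fin n, |A p i j|)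
    (hcol : ∀ p : EuclideanSpace ℝ (Fin n), ∀ j : Fin n, a₂ > ∑ i : Fin n, |A p i j|)
    (x ξ uI : ℝ → EuclideanSpace ℝ (Fin n))
    (u : ℝ → EuclideanSpace ℝ (Fin n))
    (hu : ∀ t, u t = -(kP • gradient φ (x t)) - kD • ξ t + kI • uI t)
    (hx : ∀ t, HasDerivAt x (ξ t) t)
    (hξ : ∀ t, HasDerivAt ξ (b • ξ t + u t + uB (x t)) t)
    (huI : ∀ t, HasDerivAt uI (-(kP • gradient φ (x t)) - kD • ξ t) t)
    (V : ℝ → ℝ)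
    (hV : ∀ t, V t = φ (x t) + (1 / (2 * kP)) * ‖ξ t‖ ^ 2
        + (β / 2) * ‖kI • (uI t - ξ t) + uB (x t)‖ ^ 2)
    (z : ℝ → EuclideanSpace ℝ (Fin n))
    (hz : ∀ t, z t = kI • (uI t - ξ t) + uB (x t)) :
    ∀ t, deriv V t ≤ 0 ∧ (deriv V t = 0 ↔ ξ t = 0 ∧ z t = 0) :=
  pid_lyapunov_decrease_general n b kP kD kI β hkP φ hφ uB huB a₁ a₂ ha₁ ha₂ A hA hrow hcol x ξ uI u
    hu hx hξ huI V hV z hz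
end

section
/- Consider the PID-controlled pendulum: trajectories θ, ω, u_I : ℝ → ℝ satisfying θ'(t) = ω(t), ω'(t) = b·ω(t) − w·sin(θ(t)) + u(t) with u(t) = −(k_P/2)·sin(θ(t) − θ_t) − k_D ω(t) + k_I u_I(t), and u_I'(t) = −(k_P/2)·sin(θ(t) − θ_t) − k_D ω(t), where θ_t ∈ ℝ is the target angle, w > 0, and b, k_P, k_D, k_I are real gains with k_P > 0, k_I > w, k_I + b > 0, and, setting β = 1/(k_P(b + k_I)k_I), k_D > b + k_I + β k_P w / 2. Then every such trajectory defined on [0,∞) satisfies: ω(t) → 0, k_I u_I(t) − w·sin(θ(t)) → 0, and sin(θ(t) − θ_t) → 0 as t → ∞; equivalently, the distance of θ(t) modulo 2π to the set {θ_t, θ_t + π} tends to 0. -/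
/-!
Put `q = kD - b - kI`, `B = b + kI` and `p = kI uI - w sin θ - kI ω`. In the coordinates
`(θ, ω, p)` the closed loop reads
  `θ' = ω`, `ω' = -q ω - (kP / 2) sin (θ - θt) + p`, `p' = -(w cos θ + kI B) ω - kI p`,
and the condition on `kD` says `q > w / (2 B kI)`. For small `ε > 0` the function
  `V = (kP + 2 ε q) sin² ((θ - θt) / 2) + ω² / 2 + p² / (2 kI B) + ε ω sin (θ - θt)`
is bounded below and satisfies `V' ≤ -c (ω² + sin² (θ - θt) + p²)` with `c > 0`, so this
energy is integrable on `[0, ∞)`. Since `V` decreases, `ω` and `p` stay bounded, hence so does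
the derivative of the energy, and Barbalat's lemma makes the energy tend to `0`.
-/

open Real Filter Set MeasureTheory Topology NNReal

theorem LipschitzOnWith.abs_intervalIntegral_sub_mul_le {g : ℝ → ℝ} {K : ℝ≥0} {s : Set ℝ}
    {t δ : ℝ} (hg : LipschitzOnWith K g s) (hδ : 0 ≤ δ) (hs : Icc t (t + δ) ⊆ s) :
    |(∫ x in t..t + δ, g x) - δ * g t| ≤ K * δ * δ := by
  have hint : IntervalIntegrable g volume t (t + δ) :=
    (hg.continuousOn.mono (by rwa [uIcc_of_le (by linarith)])).intervalIntegrable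
  have hsub : (∫ x in t..t + δ, g x) - δ * g t = ∫ x in t..t + δ, (g x - g t) := by
    simp [intervalIntegral.integral_sub hint intervalIntegrable_const]
  rw [hsub, ← Real.norm_eq_abs]
  calc ‖∫ x in t..t + δ, (g x - g t)‖ ≤ K * δ * |t + δ - t| :=
        intervalIntegral.norm_integral_le_of_norm_le_const fun x hx => ?_
    _ = K * δ * δ := by rw [add_sub_cancel_left, abs_of_nonneg hδ]
  rw [uIoc_of_le (by linarith)] at hx
  calc ‖g x - g t‖ = dist (g x) (g t) := rfl
    _ ≤ K * dist x t := hg.dist_le_mul x (hs ⟨hx.1.le, hx.2⟩) t (hs ⟨le_rfl, by linarith⟩)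
    _ ≤ K * δ := by
      gcongr
      rw [Real.dist_eq, abs_of_pos (by linarith [hx.1])]
      linarith [hx.2]

theorem tendsto_intervalIntegral_self_add_atTop_zero {g : ℝ → ℝ} {a : ℝ}
    (hint : IntegrableOn g (Ioi a)) (δ : ℝ) :
    Tendsto (fun t => ∫ x in t..t + δ, g x) atTop (𝓝 0) := by
  have h := (tendsto_integral_Ioi_zero (f := g) (μ := volume) tendsto_id).sub
    (tendsto_integral_Ioi_zero (f := g) (μ := volume)
      (tendsto_atTop_add_const_right _ δ tendsto_id))
  rw [sub_zero] at h
  refine h.congr' ?_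
  filter_upwards [eventually_ge_atTop a, eventually_ge_atTop (a - δ)] with t ht htδ
  rw [id, ← intervalIntegral.integral_interval_add_Ioi (hint.mono_set (Ioi_subset_Ioi ht))
    (hint.mono_set (Ioi_subset_Ioi (by linarith : a ≤ t + δ))), add_sub_cancel_right]

/-- Barbalat's lemma. -/
theorem tendsto_zero_of_integrableOn_Ioi_of_lipschitzOnWith {g : ℝ → ℝ} {K : ℝ≥0} {a : ℝ}
    (hint : IntegrableOn g (Ioi a)) (hlip : LipschitzOnWith K g (Ici a)) :
    Tendsto g atTop (𝓝 0) := by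
  refine Metric.tendsto_nhds.2 fun ε hε => ?_
  set δ : ℝ := ε / (2 * (K + 1)) with hδ
  have hδ0 : 0 < δ := by positivity
  have hKδ : K * δ ≤ ε / 2 := by
    rw [hδ, mul_div_assoc', div_le_div_iff₀ (by positivity) two_pos]
    nlinarith
  filter_upwards [eventually_ge_atTop a,
    (tendsto_intervalIntegral_self_add_atTop_zero hint δ).eventually
      (Metric.ball_mem_nhds 0 (by positivity : 0 < ε / 2 * δ))] with t ht hsmall
  have hwin := hlip.abs_intervalIntegral_sub_mul_le hδ0.le fun x hx => le_trans ht hx.1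
  rw [Real.dist_eq, sub_zero] at hsmall ⊢
  have : |g t| * δ < ε * δ := by
    calc |g t| * δ = |δ * g t| := by rw [abs_mul, abs_of_pos hδ0, mul_comm]
      _ ≤ |∫ x in t..t + δ, g x| + |(∫ x in t..t + δ, g x) - δ * g t| := by
        simpa using abs_sub (∫ x in t..t + δ, g x) ((∫ x in t..t + δ, g x) - δ * g t)
      _ < ε / 2 * δ + ε / 2 * δ := by nlinarith
      _ = ε * δ := by ring
  exact lt_of_mul_lt_mul_right this hδ0.le

theorem tendsto_zero_of_integrableOn_Ioi_of_hasDerivAt {g g' : ℝ → ℝ} {a M : ℝ}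
    (hint : IntegrableOn g (Ioi a)) (hg : ∀ t ∈ Ici a, HasDerivAt g (g' t) t)
    (hg' : ∀ t ∈ Ici a, |g' t| ≤ M) : Tendsto g atTop (𝓝 0) :=
  tendsto_zero_of_integrableOn_Ioi_of_lipschitzOnWith hint <|
    (convex_Ici a).lipschitzOnWith_of_nnnorm_hasDerivWithin_le (C := M.toNNReal)
      (fun t ht => (hg t ht).hasDerivWithinAt) fun t ht => by
        rw [← NNReal.coe_le_coe, coe_nnnorm, Real.coe_toNNReal']
        exact (hg' t ht).trans (le_max_left _ _)

theorem intervalIntegral_le_sub_of_hasDerivAt_le_neg {V V' g : ℝ → ℝ} {a T : ℝ}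
    (hV : ∀ t ∈ Ici a, HasDerivAt V (V' t) t) (hg : ContinuousOn g (Ici a))
    (hle : ∀ t ∈ Ici a, V' t ≤ -g t) (hT : a ≤ T) :
    ∫ t in a..T, g t ≤ V a - V T := by
  have h := intervalIntegral.sub_le_integral_of_hasDeriv_right_of_le hT
    (fun t ht => (hV t ht.1).continuousAt.continuousWithinAt)
    (fun t ht => (hV t ht.1.le).hasDerivWithinAt)
    (hg.mono Icc_subset_Ici_self).integrableOn_Icc.neg (fun t ht => hle t ht.1.le)
  simp only [Pi.neg_apply, intervalIntegral.integral_neg] at h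
  linarith

theorem integrableOn_Ioi_of_hasDerivAt_le_neg_mul {V V' g : ℝ → ℝ} {a c m : ℝ} (hc : 0 < c)
    (hV : ∀ t ∈ Ici a, HasDerivAt V (V' t) t) (hVm : ∀ t ∈ Ici a, m ≤ V t)
    (hg : ContinuousOn g (Ici a)) (hg0 : ∀ t ∈ Ici a, 0 ≤ g t)
    (hle : ∀ t ∈ Ici a, V' t ≤ -(c * g t)) : IntegrableOn g (Ioi a) := by
  refine integrableOn_Ioi_of_intervalIntegral_norm_bounded ((V a - m) / c) a
    (fun T => (hg.mono Icc_subset_Ici_self).integrableOn_Icc.mono_set Ioc_subset_Icc_self)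
    tendsto_id ?_
  filter_upwards [eventually_ge_atTop a] with T hT
  have hnorm : ∫ t in a..T, ‖g t‖ = ∫ t in a..T, g t :=
    intervalIntegral.integral_congr fun t ht => by
      rw [uIcc_of_le hT] at ht
      exact Real.norm_of_nonneg (hg0 t ht.1)
  have h := intervalIntegral_le_sub_of_hasDerivAt_le_neg (g := fun t => c * g t) hV
    (continuousOn_const.mul hg) hle hT
  rw [intervalIntegral.integral_const_mul] at h
  rw [id, hnorm, le_div_iff₀ hc]
  linarith [hVm T hT]

theorem tendsto_zero_of_sq_le {α : Type*} {l : Filter α} {f g : α → ℝ}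
    (hg : Tendsto g l (𝓝 0)) (hfg : ∀ x, f x ^ 2 ≤ g x) : Tendsto f l (𝓝 0) :=
  squeeze_zero_norm (fun x => Real.abs_le_sqrt (hfg x)) (by simpa using hg.sqrt)

noncomputable section

namespace PendulumPID

variable (q kP w kI B θt : ℝ)

def omegaRate (θ ω p : ℝ) : ℝ := -q * ω - kP / 2 * sin (θ - θt) + p

def pRate (θ ω p : ℝ) : ℝ := -(w * cos θ + kI * B) * ω - kI * p

def energy (θ ω p : ℝ) : ℝ := ω ^ 2 + sin (θ - θt) ^ 2 + p ^ 2

def energyDeriv (θ ω p : ℝ) : ℝ :=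
  2 * ω * omegaRate q kP θt θ ω p + 2 * sin (θ - θt) * (cos (θ - θt) * ω)
    + 2 * p * pRate w kI B θ ω p

/-- `(1 - cos (θ - θt)) / 2` is the potential `sin² ((θ - θt) / 2)`. -/
def lyapunov (ε θ ω p : ℝ) : ℝ :=
  (kP + 2 * ε * q) * (1 - cos (θ - θt)) / 2 + ω ^ 2 / 2 + p ^ 2 / (2 * kI * B)
    + ε * sin (θ - θt) * ω

def lyapunovDeriv (ε θ ω p : ℝ) : ℝ :=
  -q * ω ^ 2 + ε * cos (θ - θt) * ω ^ 2 - ε * kP / 2 * sin (θ - θt) ^ 2 - p ^ 2 / B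
    - w / (kI * B) * cos θ * p * ω + ε * sin (θ - θt) * p

variable {q kP w kI B θt}

section Trajectory

variable {θ ω p : ℝ → ℝ} {t : ℝ}

theorem hasDerivAt_lyapunov (ε : ℝ) (hkI : kI ≠ 0) (hB : B ≠ 0) (hθ : HasDerivAt θ (ω t) t)
    (hω : HasDerivAt ω (omegaRate q kP θt (θ t) (ω t) (p t)) t)
    (hp : HasDerivAt p (pRate w kI B (θ t) (ω t) (p t)) t) :
    HasDerivAt (fun t => lyapunov q kP kI B θt ε (θ t) (ω t) (p t))
      (lyapunovDeriv q kP w kI B θt ε (θ t) (ω t) (p t)) t := by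
  have hs := (hθ.sub_const θt).sin
  have hc := (hθ.sub_const θt).cos
  refine (((((hc.const_sub 1).const_mul (kP + 2 * ε * q)).div_const 2).fun_add
    ((hω.fun_pow 2).div_const 2)).fun_add ((hp.fun_pow 2).div_const (2 * kI * B))).fun_add
    ((hs.const_mul ε).fun_mul hω) |>.congr_deriv ?_
  simp only [lyapunovDeriv, omegaRate, pRate]
  field_simp
  ring

theorem hasDerivAt_energy (hθ : HasDerivAt θ (ω t) t)
    (hω : HasDerivAt ω (omegaRate q kP θt (θ t) (ω t) (p t)) t)
    (hp : HasDerivAt p (pRate w kI B (θ t) (ω t) (p t)) t) :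
    HasDerivAt (fun t => energy θt (θ t) (ω t) (p t))
      (energyDeriv q kP w kI B θt (θ t) (ω t) (p t)) t := by
  refine (((hω.fun_pow 2).fun_add ((hθ.sub_const θt).sin.fun_pow 2)).fun_add
    (hp.fun_pow 2)).congr_deriv ?_
  simp only [energyDeriv]
  push_cast
  ring

end Trajectory

theorem lyapunovDeriv_le {ε c : ℝ} (hw : 0 < w) (hwkI : w ≤ kI) (hB : 0 < B) (hε : 0 ≤ ε)
    (hεB : 4 * ε * B ≤ kP) (hq : w / (2 * B * kI) + 2 * ε ≤ q) (hcε : c ≤ ε)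
    (hckP : 4 * c ≤ ε * kP) (hcB : 4 * c * B ≤ 1) (θ ω p : ℝ) :
    lyapunovDeriv q kP w kI B θt ε θ ω p ≤ -(c * energy θt θ ω p) := by
  have hkI : 0 < kI := hw.trans_le hwkI
  set S := sin (θ - θt)
  have hgrav : -(w / (kI * B) * cos θ * p * ω) ≤ p ^ 2 / (2 * B) + w / (2 * B * kI) * ω ^ 2 := by
    have hpω : -(cos θ * (p * ω)) ≤ (p ^ 2 + ω ^ 2) / 2 := by
      have : |cos θ * (p * ω)| ≤ |p| * |ω| := by
        rw [abs_mul, abs_mul]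
        exact mul_le_of_le_one_left (by positivity) (abs_cos_le_one θ)
      nlinarith [neg_abs_le (cos θ * (p * ω)), two_mul_le_add_sq |p| |ω|, sq_abs p, sq_abs ω]
    have key : -(2 * w * (cos θ * (p * ω))) ≤ kI * p ^ 2 + w * ω ^ 2 := by
      nlinarith [mul_le_mul_of_nonneg_left hpω hw.le,
        mul_le_mul_of_nonneg_right hwkI (sq_nonneg p)]
    have e1 : -(w / (kI * B) * cos θ * p * ω) = -(2 * w * (cos θ * (p * ω))) / (2 * B * kI) := by
      field_simp
    have e2 : p ^ 2 / (2 * B) + w / (2 * B * kI) * ω ^ 2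
        = (kI * p ^ 2 + w * ω ^ 2) / (2 * B * kI) := by
      field_simp
    rw [e1, e2]
    exact div_le_div_of_nonneg_right key (by positivity)
  have hcoupling : ε * S * p ≤ p ^ 2 / (4 * B) + ε * kP / 4 * S ^ 2 := by
    have : ε * S * p ≤ p ^ 2 / (4 * B) + ε ^ 2 * B * S ^ 2 := by
      rw [div_add' _ _ _ (by positivity), le_div_iff₀ (by positivity)]
      nlinarith [sq_nonneg (p - 2 * ε * B * S)]
    nlinarith [mul_le_mul_of_nonneg_left hεB (mul_nonneg hε (sq_nonneg S))]
  have hcos : ε * cos (θ - θt) * ω ^ 2 ≤ ε * ω ^ 2 := by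
    nlinarith [mul_le_mul_of_nonneg_left (cos_le_one (θ - θt)) (mul_nonneg hε (sq_nonneg ω))]
  have hcp : c * p ^ 2 ≤ p ^ 2 / (4 * B) := by
    rw [le_div_iff₀ (by positivity)]
    nlinarith [sq_nonneg p]
  have hcω : c * ω ^ 2 ≤ ε * ω ^ 2 := mul_le_mul_of_nonneg_right hcε (sq_nonneg ω)
  have hcS : c * S ^ 2 ≤ ε * kP / 4 * S ^ 2 := mul_le_mul_of_nonneg_right (by linarith) (sq_nonneg S)
  have hqω : (w / (2 * B * kI) + 2 * ε) * ω ^ 2 ≤ q * ω ^ 2 :=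
    mul_le_mul_of_nonneg_right hq (sq_nonneg ω)
  have hsplit : p ^ 2 / B = p ^ 2 / (2 * B) + p ^ 2 / (4 * B) + p ^ 2 / (4 * B) := by
    field_simp; ring
  simp only [lyapunovDeriv, energy]
  linarith

theorem exists_lyapunovDeriv_le (hw : 0 < w) (hwkI : w ≤ kI) (hkP : 0 < kP) (hB : 0 < B)
    (hq : w / (2 * B * kI) < q) :
    ∃ ε c, 0 ≤ ε ∧ 0 < c ∧
      ∀ θ ω p, lyapunovDeriv q kP w kI B θt ε θ ω p ≤ -(c * energy θt θ ω p) := by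
  set ε := min ((q - w / (2 * B * kI)) / 2) (kP / (4 * B))
  have hε : 0 < ε := lt_min (by linarith) (by positivity)
  have hεq : ε ≤ (q - w / (2 * B * kI)) / 2 := min_le_left _ _
  have hεB : 4 * ε * B ≤ kP := by
    have := (le_div_iff₀ (by positivity)).1 (min_le_right ((q - w / (2 * B * kI)) / 2) (kP / (4 * B)))
    linarith
  set c := min ε (min (ε * kP / 4) (1 / (4 * B)))
  have hcε : c ≤ ε := min_le_left _ _
  have hckP : c ≤ ε * kP / 4 := (min_le_right ε _).trans (min_le_left _ _)
  have hcB : c * (4 * B) ≤ 1 :=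
    (le_div_iff₀ (by positivity)).1 ((min_le_right ε _).trans (min_le_right _ _))
  exact ⟨ε, c, hε.le, by positivity, lyapunovDeriv_le hw hwkI hB hε.le hεB (by linarith) hcε
    (by linarith) (by linarith)⟩

theorem le_lyapunov_add_sq {ε : ℝ} (hA : 0 ≤ kP + 2 * ε * q) (θ ω p : ℝ) :
    ω ^ 2 / 4 + p ^ 2 / (2 * kI * B) ≤ lyapunov q kP kI B θt ε θ ω p + ε ^ 2 := by
  have hcos : 0 ≤ (kP + 2 * ε * q) * (1 - cos (θ - θt)) / 2 :=
    div_nonneg (mul_nonneg hA (sub_nonneg.2 (cos_le_one _))) zero_le_two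
  have hsin : ε ^ 2 * sin (θ - θt) ^ 2 ≤ ε ^ 2 :=
    mul_le_of_le_one_right (sq_nonneg ε) (sin_sq_le_one _)
  simp only [lyapunov]
  nlinarith [sq_nonneg (ω / 2 + ε * sin (θ - θt))]

theorem energy_le_lyapunov {ε : ℝ} (hkI : 0 < kI) (hB : 0 < B) (hA : 0 ≤ kP + 2 * ε * q)
    (θ ω p : ℝ) :
    energy θt θ ω p ≤ (4 + 2 * kI * B) * (lyapunov q kP kI B θt ε θ ω p + ε ^ 2) + 1 := by
  have hlow := mul_le_mul_of_nonneg_left (le_lyapunov_add_sq (θt := θt) (B := B) (kI := kI) hA θ ω p)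
    (by positivity : 0 ≤ 4 + 2 * kI * B)
  have hexpand : (4 + 2 * kI * B) * (ω ^ 2 / 4 + p ^ 2 / (2 * kI * B))
      = ω ^ 2 + p ^ 2 + kI * B / 2 * ω ^ 2 + 2 / (kI * B) * p ^ 2 := by
    field_simp
    ring
  have : 0 ≤ kI * B / 2 * ω ^ 2 + 2 / (kI * B) * p ^ 2 := by positivity
  simp only [energy]
  nlinarith [sin_sq_le_one (θ - θt)]

theorem abs_omegaRate_le {R : ℝ} (hkP : 0 ≤ kP) {θ ω p : ℝ} (hω : |ω| ≤ R) (hp : |p| ≤ R) :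
    |omegaRate q kP θt θ ω p| ≤ |q| * R + kP / 2 + R :=
  calc |omegaRate q kP θt θ ω p| ≤ |-q * ω| + |kP / 2 * sin (θ - θt)| + |p| :=
        (abs_add_le _ _).trans (by gcongr; exact abs_sub _ _)
    _ ≤ |q| * R + kP / 2 + R := by
        rw [abs_mul, abs_neg, abs_mul, abs_of_nonneg (by positivity : 0 ≤ kP / 2)]
        bound [abs_sin_le_one (θ - θt)]

theorem abs_pRate_le {R : ℝ} (hw : 0 ≤ w) (hkI : 0 ≤ kI) (hB : 0 ≤ B) {θ ω p : ℝ}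
    (hω : |ω| ≤ R) (hp : |p| ≤ R) :
    |pRate w kI B θ ω p| ≤ (w + kI * B) * R + kI * R :=
  calc |pRate w kI B θ ω p| ≤ (|w * cos θ| + |kI * B|) * |ω| + |kI * p| := by
        refine (abs_sub _ _).trans ?_
        rw [abs_mul, abs_neg]
        gcongr
        exact abs_add_le _ _
    _ ≤ (w + kI * B) * R + kI * R := by
        rw [abs_mul, abs_mul, abs_mul, abs_of_nonneg hw, abs_of_nonneg hkI, abs_of_nonneg hB]
        bound [abs_cos_le_one θ]

theorem abs_energyDeriv_le {R : ℝ} (hkP : 0 ≤ kP) (hw : 0 ≤ w) (hkI : 0 ≤ kI) (hB : 0 ≤ B)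
    (hR : 0 ≤ R) {θ ω p : ℝ} (hω : |ω| ≤ R) (hp : |p| ≤ R) :
    |energyDeriv q kP w kI B θt θ ω p|
      ≤ 2 * R * (|q| * R + kP / 2 + R) + 2 * R + 2 * R * ((w + kI * B) * R + kI * R) := by
  have ha := abs_omegaRate_le (q := q) (θt := θt) (θ := θ) hkP hω hp
  have he := abs_pRate_le (θ := θ) hw hkI hB hω hp
  calc |energyDeriv q kP w kI B θt θ ω p|
      ≤ |2 * ω * omegaRate q kP θt θ ω p| + |2 * sin (θ - θt) * (cos (θ - θt) * ω)|
        + |2 * p * pRate w kI B θ ω p| := abs_add_three _ _ _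
    _ ≤ 2 * R * (|q| * R + kP / 2 + R) + 2 * 1 * (1 * R)
        + 2 * R * ((w + kI * B) * R + kI * R) := by
        simp only [abs_mul, abs_two]
        bound [abs_sin_le_one (θ - θt), abs_cos_le_one (θ - θt)]
    _ = _ := by ring

variable (q kP w kI B θt) in
structure IsSolution (θ ω p : ℝ → ℝ) : Prop where
  hasDerivAt_θ : ∀ t ∈ Ici (0 : ℝ), HasDerivAt θ (ω t) t
  hasDerivAt_ω : ∀ t ∈ Ici (0 : ℝ), HasDerivAt ω (omegaRate q kP θt (θ t) (ω t) (p t)) t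
  hasDerivAt_p : ∀ t ∈ Ici (0 : ℝ), HasDerivAt p (pRate w kI B (θ t) (ω t) (p t)) t

namespace IsSolution

variable {θ ω p : ℝ → ℝ} {ε c : ℝ}

theorem lyapunov_le (h : IsSolution q kP w kI B θt θ ω p) (hkI : 0 < kI) (hB : 0 < B)
    (hc : 0 ≤ c)
    (hdecay : ∀ θ ω p, lyapunovDeriv q kP w kI B θt ε θ ω p ≤ -(c * energy θt θ ω p))
    {t : ℝ} (ht : t ∈ Ici 0) :
    lyapunov q kP kI B θt ε (θ t) (ω t) (p t) ≤ lyapunov q kP kI B θt ε (θ 0) (ω 0) (p 0) := by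
  have hV t (ht : t ∈ Ici (0 : ℝ)) := hasDerivAt_lyapunov ε hkI.ne' hB.ne'
    (h.hasDerivAt_θ t ht) (h.hasDerivAt_ω t ht) (h.hasDerivAt_p t ht)
  refine antitoneOn_of_hasDerivWithinAt_nonpos (convex_Ici 0)
    (fun t ht => (hV t ht).continuousAt.continuousWithinAt)
    (fun t ht => (hV t (interior_subset ht)).hasDerivWithinAt)
    (fun t _ => (hdecay _ _ _).trans ?_) self_mem_Ici ht ht
  have : 0 ≤ energy θt (θ t) (ω t) (p t) := by simp only [energy]; positivity
  nlinarith

theorem integrableOn_energy (h : IsSolution q kP w kI B θt θ ω p) (hkI : 0 < kI) (hB : 0 < B)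
    (hA : 0 ≤ kP + 2 * ε * q) (hc : 0 < c)
    (hdecay : ∀ θ ω p, lyapunovDeriv q kP w kI B θt ε θ ω p ≤ -(c * energy θt θ ω p)) :
    IntegrableOn (fun t => energy θt (θ t) (ω t) (p t)) (Ioi 0) := by
  refine integrableOn_Ioi_of_hasDerivAt_le_neg_mul hc (m := -ε ^ 2)
    (fun t ht => hasDerivAt_lyapunov ε hkI.ne' hB.ne'
      (h.hasDerivAt_θ t ht) (h.hasDerivAt_ω t ht) (h.hasDerivAt_p t ht))
    (fun t _ => ?_)
    (fun t ht => (hasDerivAt_energy (h.hasDerivAt_θ t ht) (h.hasDerivAt_ω t ht)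
      (h.hasDerivAt_p t ht)).continuousAt.continuousWithinAt)
    (fun t _ => by simp only [energy]; positivity) (fun t _ => hdecay _ _ _)
  have := le_lyapunov_add_sq (θt := θt) (B := B) (kI := kI) hA (θ t) (ω t) (p t)
  have : 0 ≤ ω t ^ 2 / 4 + p t ^ 2 / (2 * kI * B) := by positivity
  linarith

theorem tendsto (h : IsSolution q kP w kI B θt θ ω p) (hw : 0 < w) (hwkI : w ≤ kI)
    (hkP : 0 < kP) (hB : 0 < B) (hq : w / (2 * B * kI) < q) :
    Tendsto ω atTop (𝓝 0) ∧ Tendsto (fun t => sin (θ t - θt)) atTop (𝓝 0) ∧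
      Tendsto p atTop (𝓝 0) := by
  have hkI : 0 < kI := hw.trans_le hwkI
  obtain ⟨ε, c, hε, hc, hdecay⟩ := exists_lyapunovDeriv_le (θt := θt) hw hwkI hkP hB hq
  have hA : 0 ≤ kP + 2 * ε * q := by
    have : 0 < q := (by positivity : 0 < w / (2 * B * kI)).trans hq
    positivity
  set G := (4 + 2 * kI * B) * (lyapunov q kP kI B θt ε (θ 0) (ω 0) (p 0) + ε ^ 2) + 1
  have hEG : ∀ t ∈ Ici (0 : ℝ), energy θt (θ t) (ω t) (p t) ≤ G := fun t ht =>
    (energy_le_lyapunov hkI hB hA _ _ _).trans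
      (by simp only [G]; gcongr; exact h.lyapunov_le hkI hB hc.le hdecay ht)
  have hbound : ∀ t ∈ Ici (0 : ℝ), |ω t| ≤ √G ∧ |p t| ≤ √G := fun t ht => by
    have := hEG t ht
    simp only [energy] at this
    exact ⟨Real.abs_le_sqrt (by nlinarith [sq_nonneg (sin (θ t - θt)), sq_nonneg (p t)]),
      Real.abs_le_sqrt (by nlinarith [sq_nonneg (sin (θ t - θt)), sq_nonneg (ω t)])⟩
  have hE := tendsto_zero_of_integrableOn_Ioi_of_hasDerivAt
    (h.integrableOn_energy hkI hB hA hc hdecay)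
    (fun t ht => hasDerivAt_energy (h.hasDerivAt_θ t ht) (h.hasDerivAt_ω t ht)
      (h.hasDerivAt_p t ht))
    fun t ht => abs_energyDeriv_le hkP.le hw.le hkI.le hB.le (sqrt_nonneg G)
      (hbound t ht).1 (hbound t ht).2
  refine ⟨tendsto_zero_of_sq_le hE fun t => ?_, tendsto_zero_of_sq_le hE fun t => ?_,
    tendsto_zero_of_sq_le hE fun t => ?_⟩ <;>
  · simp only [energy]
    nlinarith [sq_nonneg (ω t), sq_nonneg (sin (θ t - θt)), sq_nonneg (p t)]

theorem of_pid {b kD : ℝ} {uI u : ℝ → ℝ}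
    (hu : ∀ t, u t = -(kP / 2) * sin (θ t - θt) - kD * ω t + kI * uI t)
    (hθ : ∀ t ∈ Ici (0 : ℝ), HasDerivAt θ (ω t) t)
    (hω : ∀ t ∈ Ici (0 : ℝ), HasDerivAt ω (b * ω t - w * sin (θ t) + u t) t)
    (huI : ∀ t ∈ Ici (0 : ℝ), HasDerivAt uI (-(kP / 2) * sin (θ t - θt) - kD * ω t) t) :
    IsSolution (kD - (b + kI)) kP w kI (b + kI) θt θ ω
      (fun t => kI * uI t - w * sin (θ t) - kI * ω t) := by
  have hω' t (ht : t ∈ Ici (0 : ℝ)) :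
      HasDerivAt ω (omegaRate (kD - (b + kI)) kP θt (θ t) (ω t)
        (kI * uI t - w * sin (θ t) - kI * ω t)) t :=
    (hω t ht).congr_deriv (by rw [hu]; simp only [omegaRate]; ring)
  refine ⟨hθ, hω', fun t ht => ?_⟩
  refine ((((huI t ht).const_mul kI).fun_sub ((hθ t ht).sin.const_mul w)).fun_sub
    ((hω' t ht).const_mul kI)).congr_deriv ?_
  simp only [omegaRate, pRate]
  ring

end IsSolution

end PendulumPID

end

/-- PID stabilization of the nonlinear pendulum at an arbitrary
target angle `θt`, despite the (a priori unknown) gravitational term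
`−w sin θ` treated as a state-dependent bias. -/
theorem pendulum_pid_convergence
    (b w kP kD kI β θt : ℝ)
    (hw : 0 < w) (hkP : 0 < kP) (hkI : w < kI) (hbkI : 0 < kI + b)
    (hβ : β = 1 / (kP * (b + kI) * kI))
    (hkD : kD > b + kI + β * kP * w / 2)
    (θ ω uI : ℝ → ℝ)
    (u : ℝ → ℝ)
    (hu : ∀ t, u t = -(kP / 2) * Real.sin (θ t - θt) - kD * ω t + kI * uI t)
    (hθ : ∀ t ∈ Set.Ici (0 : ℝ), HasDerivAt θ (ω t) t)
    (hω : ∀ t ∈ Set.Ici (0 : ℝ),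
      HasDerivAt ω (b * ω t - w * Real.sin (θ t) + u t) t)
    (huI : ∀ t ∈ Set.Ici (0 : ℝ),
      HasDerivAt uI (-(kP / 2) * Real.sin (θ t - θt) - kD * ω t) t) :
    Tendsto ω atTop (nhds 0) ∧
    Tendsto (fun t => kI * uI t - w * Real.sin (θ t)) atTop (nhds 0) ∧
    Tendsto (fun t => Real.sin (θ t - θt)) atTop (nhds 0) := by
  have hB : 0 < b + kI := by linarith
  have hq : w / (2 * (b + kI) * kI) < kD - (b + kI) := by
    have : β * kP * w / 2 = w / (2 * (b + kI) * kI) := by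
      rw [hβ]
      field_simp
    linarith
  obtain ⟨hω0, hsin0, hp0⟩ :=
    (PendulumPID.IsSolution.of_pid hu hθ hω huI).tendsto hw hkI.le hkP hB hq
  refine ⟨hω0, ?_, hsin0⟩
  simpa using hp0.add (hω0.const_mul kI)
end

section
/- Identify the plane ℝ² with ℂ. Let v > 0 be real, ω₀ > 0, k_P > 0. Let θ, p, θ_r, p_r : ℝ → ℝ × ℂ × ℝ × ℂ be differentiable with θ_r' = ω₀, p_r' = e^{iθ_r}, θ' = ω₀ + ω_P, p' = e^{iθ} v, where ω_P(t) = k_P · Re( e^{−iθ(t)} ( ω₀ (p(t) − p_r(t)) − i e^{iθ_r(t)} ) ). Define c(t) = p(t) + (i/ω₀) e^{iθ(t)} v, c_r = p_r + (i/ω₀) e^{iθ_r}, and V(t) = (1/2)|c(t) − c_r(t)|². Then V'(t) = −k_P · v · ( Re( e^{−iθ(t)} (c(t) − c_r(t)) ) )² ≤ 0 for all t. -/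
open Complex

/-!
The reference centre `c_r` is stationary, and `c` moves with velocity `-(ω_P / ω₀) e^{iθ} v`,
along the heading only. Hence `V' = -(ω_P v / ω₀) Re(e^{-iθ} (c - c_r))`. Since `v` is real, the
feedback equals `ω_P = k_P ω₀ Re(e^{-iθ} (c - c_r))`, which gives `V' = -k_P v Re(e^{-iθ} (c - c_r))²`.
-/

open ComplexConjugate in
lemma conj_exp_ofReal_mul_I (θ : ℝ) : conj (exp (θ * I)) = exp (-θ * I) := by
  rw [← exp_conj, map_mul, conj_ofReal, conj_I, mul_neg, neg_mul]

lemma hasDerivAt_turningCenter {θ : ℝ → ℝ} {p : ℝ → ℂ} {ω ω₀ t : ℝ} {u : ℂ}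
    (hω₀ : ω₀ ≠ 0) (hθ : HasDerivAt θ ω t) (hp : HasDerivAt p (exp (θ t * I) * u) t) :
    HasDerivAt (fun s => p s + I / ω₀ * exp (θ s * I) * u)
      ((1 - ω / ω₀ : ℝ) * (exp (θ t * I) * u)) t := by
  have he : HasDerivAt (fun s => exp (θ s * I)) (exp (θ t * I) * (ω * I)) t :=
    (hθ.ofReal_comp.mul_const I).cexp
  have hω₀' : (ω₀ : ℂ) ≠ 0 := ofReal_ne_zero.2 hω₀
  refine (hp.add ((he.const_mul (I / ω₀)).mul_const u)).congr_deriv ?_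
  push_cast
  field_simp
  linear_combination (ω * u) * I_sq

lemma hasDerivAt_half_norm_sq_of_hasDerivAt_real_mul_exp {d : ℝ → ℂ} {θ a t : ℝ}
    (hd : HasDerivAt d (a * exp (θ * I)) t) :
    HasDerivAt (fun s => 1 / 2 * ‖d s‖ ^ 2) (a * (exp (-θ * I) * d t).re) t := by
  refine (hd.norm_sq.const_mul (1 / 2)).congr_deriv ?_
  rw [Complex.inner, ← conj_exp_ofReal_mul_I]
  simp only [mul_re, mul_im, conj_re, conj_im, ofReal_re, ofReal_im]
  ring

-- After substituting the centres, what remains besides the centre error is `-I * v`,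
-- which has no real part because `v` is real.
lemma re_exp_neg_mul_steeringError (θ θr ω₀ v : ℝ) (hω₀ : ω₀ ≠ 0) (p pr : ℂ) :
    (exp (-θ * I) * (ω₀ * (p - pr) - I * exp (θr * I))).re =
      ω₀ * (exp (-θ * I) *
        (p + I / ω₀ * exp (θ * I) * v - (pr + I / ω₀ * exp (θr * I)))).re := by
  have h : exp (-θ * I) * (ω₀ * (p - pr) - I * exp (θr * I)) =
      ω₀ * (exp (-θ * I) * (p + I / ω₀ * exp (θ * I) * v - (pr + I / ω₀ * exp (θr * I))))
        - I * v := by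
    have hω₀' : (ω₀ : ℂ) ≠ 0 := ofReal_ne_zero.2 hω₀
    have he : exp (-(θ * I)) * exp (θ * I) = 1 := by rw [← exp_add, neg_add_cancel, exp_zero]
    simp only [neg_mul]
    field_simp
    linear_combination (-(I * v)) * he
  rw [h]
  simp

/-- Lyapunov decrease for the proportionally steered vehicle with
a real (aligned, possibly wrongly scaled) translation velocity `v`. -/
theorem steering_lyapunov_decrease
    (v ω₀ kP : ℝ) (hv : 0 < v) (hω₀ : 0 < ω₀) (hkP : 0 < kP)
    (θ θr : ℝ → ℝ) (p pr : ℝ → ℂ)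
    (ωP : ℝ → ℝ)
    (hωP : ∀ t, ωP t = kP * (Complex.exp (-θ t * Complex.I) *
        (ω₀ * (p t - pr t) - Complex.I * Complex.exp (θr t * Complex.I))).re)
    (hθr : ∀ t, HasDerivAt θr ω₀ t)
    (hpr : ∀ t, HasDerivAt pr (Complex.exp (θr t * Complex.I)) t)
    (hθ : ∀ t, HasDerivAt θ (ω₀ + ωP t) t)
    (hp : ∀ t, HasDerivAt p (Complex.exp (θ t * Complex.I) * v) t)
    (c cr : ℝ → ℂ)
    (hc : ∀ t, c t = p t + (Complex.I / ω₀) * Complex.exp (θ t * Complex.I) * v)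
    (hcr : ∀ t, cr t = pr t + (Complex.I / ω₀) * Complex.exp (θr t * Complex.I))
    (V : ℝ → ℝ)
    (hV : ∀ t, V t = (1 / 2) * ‖c t - cr t‖ ^ 2) :
    ∀ t, HasDerivAt V
        (-kP * v * ((Complex.exp (-θ t * Complex.I) * (c t - cr t)).re) ^ 2) t ∧
      -kP * v * ((Complex.exp (-θ t * Complex.I) * (c t - cr t)).re) ^ 2 ≤ 0 := by
  intro t
  set R := (exp (-θ t * I) * (c t - cr t)).re with hR
  have hωPR : ωP t = kP * (ω₀ * R) := by
    rw [hωP, hR, hc, hcr, re_exp_neg_mul_steeringError _ _ _ v hω₀.ne']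
  have hcd : HasDerivAt c ((1 - (ω₀ + ωP t) / ω₀ : ℝ) * (exp (θ t * I) * v)) t := by
    rw [funext hc]
    exact hasDerivAt_turningCenter hω₀.ne' (hθ t) (hp t)
  have hcrd : HasDerivAt cr 0 t := by
    have h := hasDerivAt_turningCenter (u := 1) hω₀.ne' (hθr t) (by simpa using hpr t)
    simp only [mul_one, div_self hω₀.ne', sub_self, ofReal_zero, zero_mul] at h
    rwa [funext hcr]
  have hdiff : HasDerivAt (fun s => c s - cr s) ((-(ωP t / ω₀) * v : ℝ) * exp (θ t * I)) t := by
    have hω₀' : (ω₀ : ℂ) ≠ 0 := ofReal_ne_zero.2 hω₀.ne'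
    refine (hcd.sub hcrd).congr_deriv ?_
    push_cast
    field_simp
    ring
  refine ⟨?_, ?_⟩
  · rw [funext hV]
    refine (hasDerivAt_half_norm_sq_of_hasDerivAt_real_mul_exp hdiff).congr_deriv ?_
    rw [← hR, hωPR]
    field_simp
  · nlinarith [sq_nonneg R, mul_pos hkP hv]
end

section
/- Identify the plane ℝ² with ℂ. Let v > 0 be real, ω₀ > 0, k_P > 0. Let θ, p, θ_r, p_r : ℝ → ℝ × ℂ × ℝ × ℂ be differentiable on [0,∞) with θ_r' = ω₀, p_r' = e^{iθ_r}, θ' = ω₀ + ω_P, p' = e^{iθ} v, where ω_P(t) = k_P · Re( e^{−iθ(t)} ( ω₀ (p(t) − p_r(t)) − i e^{iθ_r(t)} ) ). Then, with c(t) = p(t) + (i/ω₀) e^{iθ(t)} v and c_r = p_r(0) + (i/ω₀) e^{iθ_r(0)}, the circle center converges to the reference center: c(t) → c_r as t → ∞, and ω_P(t) → 0. -/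
/-!
In the body frame the center error `u = e^{-iθ} (c - c_r)` obeys an autonomous planar ODE along
which `‖u‖²` decreases at rate `2 k_P v (Re u)²`. The trajectory therefore stays in a compact disc
and is uniformly continuous, and Barbalat's lemma, applied first to `‖u‖²` and then to `Re u`,
gives `Re u → 0` and `(Re u)' → 0`. Since `(Re u)' = (ω₀ + ω_P) Im u - k_P v Re u` with
`ω_P = k_P ω₀ Re u`, also `Im u → 0`.
-/

open Complex Filter Set Topology

theorem AntitoneOn.exists_tendsto_atTop {f : ℝ → ℝ} {a : ℝ} (hf : AntitoneOn f (Ici a))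
    (hbdd : BddBelow (f '' Ici a)) : ∃ L, Tendsto f atTop (𝓝 L) := by
  have hanti : Antitone fun t => f (max t a) := fun s t hst =>
    hf (le_max_right s a) (le_max_right t a) (max_le_max_right a hst)
  have hrange : BddBelow (range fun t => f (max t a)) :=
    hbdd.mono (range_subset_iff.2 fun t => mem_image_of_mem f (le_max_right t a))
  refine ⟨_, (tendsto_atTop_ciInf hanti hrange).congr' ?_⟩
  filter_upwards [eventually_ge_atTop a] with t ht
  rw [max_eq_left ht]

theorem tendsto_zero_of_hasDerivAt_of_uniformContinuousOn {G g : ℝ → ℝ} {a L : ℝ}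
    (hG : ∀ t ∈ Ici a, HasDerivAt G (g t) t) (hGL : Tendsto G atTop (𝓝 L))
    (hg : UniformContinuousOn g (Ici a)) : Tendsto g atTop (𝓝 0) := by
  rw [Metric.tendsto_atTop]
  intro ε hε
  obtain ⟨δ, hδ, hgδ⟩ := Metric.uniformContinuousOn_iff.1 hg (ε / 2) (by positivity)
  obtain ⟨T, hT⟩ := Metric.tendsto_atTop.1 hGL (ε * (δ / 2) / 4) (by positivity)
  refine ⟨max T a, fun t ht => ?_⟩
  have hta : a ≤ t := le_of_max_le_right ht
  have htT : T ≤ t := le_of_max_le_left ht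
  obtain ⟨ξ, hξ, hslope⟩ := exists_hasDerivAt_eq_slope G g (by linarith : t < t + δ / 2)
    (fun s hs => (hG s (hta.trans hs.1)).continuousAt.continuousWithinAt)
    (fun s hs => hG s (hta.trans hs.1.le))
  have hgξ : |g ξ| < ε / 2 := by
    have h₁ := hT t htT
    have h₂ := hT (t + δ / 2) (by linarith)
    rw [Real.dist_eq] at h₁ h₂
    rw [hslope, add_sub_cancel_left, abs_div, abs_of_pos (half_pos hδ), div_lt_iff₀ (half_pos hδ)]
    calc |G (t + δ / 2) - G t| ≤ |G (t + δ / 2) - L| + |L - G t| := abs_sub_le _ _ _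
      _ < ε / 2 * (δ / 2) := by rw [abs_sub_comm L]; linarith
  have hgt : dist (g t) (g ξ) < ε / 2 := by
    refine hgδ t hta ξ (hta.trans hξ.1.le) ?_
    rw [Real.dist_eq, abs_sub_comm, abs_of_pos (by linarith [hξ.1])]
    linarith [hξ.2]
  rw [Real.dist_eq] at hgt
  rw [Real.dist_eq, sub_zero]
  linarith [abs_sub_abs_le_abs_sub (g t) (g ξ)]

theorem uniformContinuousOn_of_hasDerivAt_of_mapsTo {E : Type*} [NormedAddCommGroup E]
    [NormedSpace ℝ E] {u : ℝ → E} {F : E → E} {s : Set ℝ} {K : Set E} (hs : Convex ℝ s)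
    (hK : IsCompact K) (hF : ContinuousOn F K) (hu : ∀ t ∈ s, HasDerivAt u (F (u t)) t)
    (huK : MapsTo u s K) : UniformContinuousOn u s := by
  obtain ⟨C, hC⟩ := hK.exists_bound_of_continuousOn hF
  refine (hs.lipschitzOnWith_of_nnnorm_hasDerivWithin_le (C := C.toNNReal)
    (fun t ht => (hu t ht).hasDerivWithinAt) fun t ht => ?_).uniformContinuousOn
  rw [← NNReal.coe_le_coe, coe_nnnorm]
  exact (hC _ (huK ht)).trans (Real.le_coe_toNNReal C)

/-- The circle-center error `e^{-iθ} (c - c_r)`, written in the body frame, solves `u' = F u` with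
this field `F`, once `ω_P = k_P ω₀ Re u`. -/
def steeringErrorField (ω₀ kP v : ℝ) (z : ℂ) : ℂ :=
  -((ω₀ + kP * ω₀ * z.re : ℝ) * I * z) - (kP * v * z.re : ℝ)

theorem continuous_steeringErrorField (ω₀ kP v : ℝ) :
    Continuous (steeringErrorField ω₀ kP v) := by
  unfold steeringErrorField
  fun_prop

theorem re_steeringErrorField (ω₀ kP v : ℝ) (z : ℂ) :
    (steeringErrorField ω₀ kP v z).re = (ω₀ + kP * ω₀ * z.re) * z.im - kP * v * z.re := by
  simp [steeringErrorField]

theorem HasDerivAt.norm_sq_of_steeringErrorField {ω₀ kP v t : ℝ} {u : ℝ → ℂ}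
    (hu : HasDerivAt u (steeringErrorField ω₀ kP v (u t)) t) :
    HasDerivAt (‖u ·‖ ^ 2) (-(2 * kP * v * (u t).re ^ 2)) t := by
  convert hu.norm_sq using 1
  simp [Complex.inner, steeringErrorField]
  ring

theorem tendsto_zero_of_hasDerivAt_steeringErrorField {ω₀ kP v : ℝ} (hω₀ : 0 < ω₀)
    (hkP : 0 < kP) (hv : 0 < v) {u : ℝ → ℂ}
    (hu : ∀ t ∈ Ici 0, HasDerivAt u (steeringErrorField ω₀ kP v (u t)) t) :
    Tendsto u atTop (𝓝 0) := by
  have hV t (ht : t ∈ Ici 0) := (hu t ht).norm_sq_of_steeringErrorField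
  have hVanti : AntitoneOn (‖u ·‖ ^ 2) (Ici 0) :=
    antitoneOn_of_hasDerivWithinAt_nonpos (convex_Ici 0)
      (fun t ht => (hV t ht).continuousAt.continuousWithinAt)
      (fun t ht => (hV t (interior_subset ht)).hasDerivWithinAt)
      (fun t _ => by have := sq_nonneg (u t).re; nlinarith [mul_pos hkP hv])
  have hball : MapsTo u (Ici 0) (Metric.closedBall 0 ‖u 0‖) := fun t ht => by
    rw [mem_closedBall_zero_iff]
    exact (pow_le_pow_iff_left₀ (norm_nonneg _) (norm_nonneg _) two_ne_zero).1
      (hVanti self_mem_Ici ht ht)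
  obtain ⟨L, hL⟩ := hVanti.exists_tendsto_atTop ⟨0, by rintro _ ⟨t, -, rfl⟩; positivity⟩
  have huc : UniformContinuousOn u (Ici 0) :=
    uniformContinuousOn_of_hasDerivAt_of_mapsTo (convex_Ici 0) (isCompact_closedBall 0 _)
      (continuous_steeringErrorField ω₀ kP v).continuousOn hu hball
  have hcomp {g : ℂ → ℝ} (hg : Continuous g) : UniformContinuousOn (fun t => g (u t)) (Ici 0) :=
    ((isCompact_closedBall _ _).uniformContinuousOn_of_continuous hg.continuousOn).comp huc hball
  have hx : Tendsto (fun t => (u t).re) atTop (𝓝 0) := by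
    have hV' := tendsto_zero_of_hasDerivAt_of_uniformContinuousOn hV hL
      (hcomp (g := fun z => -(2 * kP * v * z.re ^ 2)) (by fun_prop))
    have hx2 : Tendsto (fun t => (u t).re ^ 2) atTop (𝓝 0) := by
      refine (mul_zero (-(2 * kP * v))⁻¹ ▸ hV'.const_mul (-(2 * kP * v))⁻¹).congr fun t => ?_
      field_simp
    rw [tendsto_zero_iff_norm_tendsto_zero]
    simpa [Real.sqrt_sq_eq_abs] using hx2.sqrt
  have hx' : Tendsto (fun t => (steeringErrorField ω₀ kP v (u t)).re) atTop (𝓝 0) :=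
    tendsto_zero_of_hasDerivAt_of_uniformContinuousOn
      (fun t ht => reCLM.hasFDerivAt.comp_hasDerivAt t (hu t ht)) hx
      (hcomp (continuous_re.comp (continuous_steeringErrorField ω₀ kP v)))
  have hrate : Tendsto (fun t => ω₀ + kP * ω₀ * (u t).re) atTop (𝓝 ω₀) := by
    simpa using (hx.const_mul (kP * ω₀)).const_add ω₀
  have hy : Tendsto (fun t => (u t).im) atTop (𝓝 0) := by
    have hnum : Tendsto (fun t => (steeringErrorField ω₀ kP v (u t)).re + kP * v * (u t).re)
        atTop (𝓝 0) := by
      simpa using hx'.add (hx.const_mul (kP * v))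
    refine (zero_div ω₀ ▸ hnum.div hrate hω₀.ne').congr' ?_
    filter_upwards [hrate.eventually_ne hω₀.ne'] with t ht
    rw [Pi.div_apply, re_steeringErrorField, div_eq_iff ht]
    ring
  simpa using (continuous_ofReal.tendsto 0).comp hx |>.add
    (((continuous_ofReal.tendsto 0).comp hy).mul_const I)

theorem reference_center_eq {ω₀ a t : ℝ} {θr : ℝ → ℝ} {pr : ℝ → ℂ} (hω₀ : ω₀ ≠ 0)
    (hθr : ∀ s ∈ Ici a, HasDerivAt θr ω₀ s)
    (hpr : ∀ s ∈ Ici a, HasDerivAt pr (exp (θr s * I)) s) (ht : a ≤ t) :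
    pr t + (I / ω₀) * exp (θr t * I) = pr a + (I / ω₀) * exp (θr a * I) := by
  have hderiv (s : ℝ) (hs : s ∈ Ici a) :
      HasDerivAt (fun r => pr r + (I / ω₀) * exp (θr r * I)) 0 s := by
    refine ((hpr s hs).add ((((hθr s hs).ofReal_comp.mul_const I).cexp).const_mul (I / ω₀))
      ).congr_deriv ?_
    have : (ω₀ : ℂ) ≠ 0 := ofReal_ne_zero.2 hω₀
    field_simp
    linear_combination exp (θr s * I) * I_mul_I
  exact constant_of_has_deriv_right_zero
    (fun s hs => (hderiv s hs.1).continuousAt.continuousWithinAt)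
    (fun s hs => (hderiv s hs.1).hasDerivWithinAt) t ⟨ht, le_rfl⟩

theorem hasDerivAt_body_frame_center_error {ω₀ v ω t : ℝ} {θ : ℝ → ℝ} {p c : ℝ → ℂ} {cr : ℂ}
    (hω₀ : ω₀ ≠ 0) (hθ : HasDerivAt θ (ω₀ + ω) t) (hp : HasDerivAt p (exp (θ t * I) * v) t)
    (hc : ∀ s, c s = p s + (I / ω₀) * exp (θ s * I) * v) :
    HasDerivAt (fun s => exp (-θ s * I) * (c s - cr))
      (-((ω₀ + ω : ℝ) * I * (exp (-θ t * I) * (c t - cr))) - (ω * v / ω₀ : ℝ)) t := by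
  have hω₀' : (ω₀ : ℂ) ≠ 0 := ofReal_ne_zero.2 hω₀
  have hexp := (hθ.ofReal_comp.mul_const I).cexp
  have hexp_neg := (hθ.ofReal_comp.neg.mul_const I).cexp
  simp only [Pi.neg_apply] at hexp_neg
  have hc' : HasDerivAt c (-(ω / ω₀ : ℝ) * exp (θ t * I) * v) t := by
    refine ((hp.add ((hexp.const_mul (I / ω₀)).mul_const (v : ℂ))).congr_of_eventuallyEq
      (Eventually.of_forall hc)).congr_deriv ?_
    push_cast
    field_simp
    linear_combination (v * (ω₀ + ω)) * I_mul_I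
  have hinv : exp (-θ t * I) * exp (θ t * I) = 1 := by rw [← exp_add]; simp
  refine (hexp_neg.mul (hc'.sub_const cr)).congr_deriv ?_
  push_cast
  field_simp
  simp only [neg_mul] at hinv ⊢
  linear_combination (-(ω * v)) * hinv

theorem re_steering_term_eq {ω₀ v θ θr : ℝ} {p pr c cr : ℂ} (hω₀ : ω₀ ≠ 0)
    (hc : c = p + (I / ω₀) * exp (θ * I) * v) (hcr : cr = pr + (I / ω₀) * exp (θr * I)) :
    (exp (-θ * I) * (ω₀ * (p - pr) - I * exp (θr * I))).re
      = ω₀ * (exp (-θ * I) * (c - cr)).re := by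
  have hω₀' : (ω₀ : ℂ) ≠ 0 := ofReal_ne_zero.2 hω₀
  have hinv : exp (-θ * I) * exp (θ * I) = 1 := by rw [← exp_add]; simp
  have key : exp (-θ * I) * (ω₀ * (p - pr) - I * exp (θr * I))
      = ω₀ * (exp (-θ * I) * (c - cr)) - I * v := by
    rw [hc, hcr]
    field_simp
    simp only [neg_mul] at hinv ⊢
    linear_combination (-(I * v)) * hinv
  rw [key]
  simp

/-- Proposition 3: under nominal proportional steering control,
a bias in the *magnitude* of the translation velocity (`v > 0` real) is
harmless: the circle center converges to the reference center and the
steering correction vanishes asymptotically. -/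
theorem steering_magnitude_bias_convergence
    (v ω₀ kP : ℝ) (hv : 0 < v) (hω₀ : 0 < ω₀) (hkP : 0 < kP)
    (θ θr : ℝ → ℝ) (p pr : ℝ → ℂ)
    (ωP : ℝ → ℝ)
    (hωP : ∀ t, ωP t = kP * (Complex.exp (-θ t * Complex.I) *
        (ω₀ * (p t - pr t) - Complex.I * Complex.exp (θr t * Complex.I))).re)
    (hθr : ∀ t ∈ Set.Ici (0 : ℝ), HasDerivAt θr ω₀ t)
    (hpr : ∀ t ∈ Set.Ici (0 : ℝ), HasDerivAt pr (Complex.exp (θr t * Complex.I)) t)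
    (hθ : ∀ t ∈ Set.Ici (0 : ℝ), HasDerivAt θ (ω₀ + ωP t) t)
    (hp : ∀ t ∈ Set.Ici (0 : ℝ), HasDerivAt p (Complex.exp (θ t * Complex.I) * v) t)
    (c : ℝ → ℂ)
    (hc : ∀ t, c t = p t + (Complex.I / ω₀) * Complex.exp (θ t * Complex.I) * v)
    (cr : ℂ)
    (hcr : cr = pr 0 + (Complex.I / ω₀) * Complex.exp (θr 0 * Complex.I)) :
    Tendsto c atTop (nhds cr) ∧ Tendsto ωP atTop (nhds 0) := by
  set u : ℝ → ℂ := fun t => exp (-θ t * I) * (c t - cr) with hu_def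
  have hωP_eq (t : ℝ) (ht : t ∈ Ici 0) : ωP t = kP * ω₀ * (u t).re := by
    rw [hωP, re_steering_term_eq hω₀.ne' (hc t)
      (hcr.trans (reference_center_eq hω₀.ne' hθr hpr ht).symm), mul_assoc]
  have hu (t : ℝ) (ht : t ∈ Ici 0) : HasDerivAt u (steeringErrorField ω₀ kP v (u t)) t := by
    refine (hasDerivAt_body_frame_center_error hω₀.ne' (hθ t ht) (hp t ht) hc).congr_deriv ?_
    rw [hωP_eq t ht, steeringErrorField]
    congr 2
    field_simp
  have hu_lim := tendsto_zero_of_hasDerivAt_steeringErrorField hω₀ hkP hv hu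
  refine ⟨?_, ?_⟩
  · rw [tendsto_iff_norm_sub_tendsto_zero]
    have hnorm (t : ℝ) : ‖exp (-θ t * I)‖ = 1 := by rw [← ofReal_neg, norm_exp_ofReal_mul_I]
    simpa only [hu_def, norm_mul, hnorm, one_mul, norm_zero] using hu_lim.norm
  · refine (mul_zero (kP * ω₀) ▸ ((continuous_re.tendsto 0).comp hu_lim).const_mul _).congr' ?_
    filter_upwards [eventually_ge_atTop 0] with t ht
    exact (hωP_eq t ht).symm
end

section
/- Let r > 0, φ ∈ (−π/2, π/2), ω₀ > 0, k_P > 0, k_I > 0, and suppose ω₀ > k_P r |sin φ| and ω₀ cos φ > k_I |sin φ| + r k_P |sin φ cos φ|. Then every complex root λ of the cubic polynomial P(λ) = λ³ + (k_I + r k_P cos φ)·λ² + (ω₀² + ω₀ r k_P sin φ)·λ + k_I ω₀² has strictly negative real part. -/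
open Real

lemma routh_hurwitz_cubic (a b c : ℝ) (ha : 0 < a) (hb : 0 < b) (hc : 0 < c)
    (hab : c < a * b) :
    ∀ lam : ℂ, lam ^ 3 + (a : ℂ) * lam ^ 2 + (b : ℂ) * lam + (c : ℂ) = 0 →
      lam.re < 0 := by
  intro lam h
  by_contra hx
  push_neg at hx
  have hre := congrArg Complex.re h
  have him := congrArg Complex.im h
  simp [pow_succ, Complex.add_re, Complex.add_im, Complex.mul_re, Complex.mul_im,
    Complex.ofReal_re, Complex.ofReal_im] at hre him
  set x := lam.re with hxdef
  set y := lam.im with hydef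
  rcases eq_or_ne y 0 with hy | hy
  · rw [hy] at hre
    nlinarith [pow_pos (lt_of_lt_of_le hc (le_of_eq rfl)) 1, sq_nonneg x,
      mul_nonneg (mul_nonneg hx hx) hx, mul_nonneg ha.le (mul_nonneg hx hx),
      mul_nonneg hb.le hx]
  · have hy2 : y ^ 2 = 3 * x ^ 2 + 2 * a * x + b := by
      have hfac : y * (3 * x ^ 2 + 2 * a * x + b - y ^ 2) = 0 := by
        ring_nf; ring_nf at him; linarith
      have := (mul_eq_zero.mp hfac).resolve_left hy
      linarith
    nlinarith [hre, mul_nonneg (mul_nonneg hx hx) hx, mul_nonneg ha.le (mul_nonneg hx hx),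
      mul_nonneg hx (add_pos (mul_pos ha hb) (by positivity : (0:ℝ) < a^2 * a)).le,
      mul_nonneg hx (sq_nonneg a), mul_nonneg hx hb.le]

/-- Routh–Hurwitz step of Proposition 4: under the gain
conditions, every complex root of the characteristic cubic has strictly
negative real part. -/
theorem cubic_roots_negative_real_part
    (r φ ω₀ kP kI : ℝ) (hr : 0 < r) (hφ : φ ∈ Set.Ioo (-(π / 2)) (π / 2))
    (hω₀ : 0 < ω₀) (hkP : 0 < kP) (hkI : 0 < kI)
    (h1 : ω₀ > kP * r * |Real.sin φ|)
    (h2 : ω₀ * Real.cos φ > kI * |Real.sin φ| + r * kP * |Real.sin φ * Real.cos φ|) :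
    ∀ lam : ℂ,
      lam ^ 3 + (↑(kI + r * kP * Real.cos φ)) * lam ^ 2
        + (↑(ω₀ ^ 2 + ω₀ * r * kP * Real.sin φ)) * lam + ↑(kI * ω₀ ^ 2) = 0 →
      lam.re < 0 := by
  have hcos : 0 < Real.cos φ := Real.cos_pos_of_mem_Ioo ⟨hφ.1, hφ.2⟩
  have hsin : |Real.sin φ| ≥ -Real.sin φ := neg_le_abs _
  have hsin' : Real.sin φ ≥ -|Real.sin φ| := neg_abs_le _
  have ha : 0 < kI + r * kP * Real.cos φ := by positivity
  have hb : 0 < ω₀ ^ 2 + ω₀ * r * kP * Real.sin φ := by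
    nlinarith [mul_lt_mul_of_pos_left h1 hω₀,
      mul_le_mul_of_nonneg_left hsin' (by positivity : (0:ℝ) ≤ ω₀ * r * kP)]
  have hc : 0 < kI * ω₀ ^ 2 := by positivity
  have habs : |Real.sin φ * Real.cos φ| = |Real.sin φ| * Real.cos φ := by
    rw [abs_mul, abs_of_pos hcos]
  have hab : kI * ω₀ ^ 2 <
      (kI + r * kP * Real.cos φ) * (ω₀ ^ 2 + ω₀ * r * kP * Real.sin φ) := by
    rw [habs] at h2
    have key : 0 < kI * Real.sin φ + ω₀ * Real.cos φ + r * kP * (Real.sin φ * Real.cos φ) := by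
      nlinarith [mul_le_mul_of_nonneg_left hsin' hkI.le,
        mul_le_mul_of_nonneg_left hsin'
          (mul_nonneg (mul_nonneg hr.le hkP.le) hcos.le)]
    nlinarith [mul_pos (mul_pos hω₀ (mul_pos hr hkP)) key]
  exact routh_hurwitz_cubic _ _ _ ha hb hc hab
end

section
/- Let r > 0, ω₀ > 0 and φ ∈ (−π/2, π/2). Then there exist k_P > 0 and k_I > 0 such that every eigenvalue of the 3×3 real matrix J = [[−k_P r cos φ, ω₀, k_I r cos φ/ω₀], [−k_P r sin φ − ω₀, 0, k_I r sin φ/ω₀], [k_P ω₀, 0, −k_I]] has strictly negative real part. In particular, any k_P, k_I > 0 satisfying ω₀ > k_P r |sin φ| and ω₀ cos φ > k_I |sin φ| + r k_P |sin φ cos φ| work. -/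
open Real Matrix

/-- Routh–Hurwitz for a monic cubic: if `p, q, t > 0` and `t < p*q`, every
complex root of `λ³ + pλ² + qλ + t` has negative real part. -/
lemma cubic_root_re_neg (p q t : ℝ) (hp : 0 < p) (hq : 0 < q) (ht : 0 < t)
    (hpq : t < p * q) (μ : ℂ)
    (h : μ ^ 3 + (p : ℂ) * μ ^ 2 + (q : ℂ) * μ + (t : ℂ) = 0) : μ.re < 0 := by
  by_contra hx
  push_neg at hx
  set x := μ.re with hxdef
  set y := μ.im with hydef
  have hre : x ^ 3 - 3 * x * y ^ 2 + p * (x ^ 2 - y ^ 2) + q * x + t = 0 := by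
    have := congrArg Complex.re h
    simp [Complex.ext_iff, pow_succ, Complex.mul_re, Complex.mul_im] at this
    nlinarith [this]
  have him : y * (3 * x ^ 2 - y ^ 2 + 2 * p * x + q) = 0 := by
    have := congrArg Complex.im h
    simp [Complex.ext_iff, pow_succ, Complex.mul_re, Complex.mul_im] at this
    nlinarith [this]
  rcases mul_eq_zero.mp him with hy | hy
  · rw [hy] at hre
    nlinarith [hre, sq_nonneg x, mul_nonneg hx hx]
  · have hy2 : y ^ 2 = 3 * x ^ 2 + 2 * p * x + q := by nlinarith [hy]
    rw [hy2] at hre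
    nlinarith [hre, sq_nonneg x, mul_nonneg (mul_nonneg hx hx) hx,
      mul_nonneg (mul_nonneg hp.le hx) hx, mul_nonneg hq.le hx, mul_nonneg (mul_nonneg hp.le hp.le) hx]

/-- linear core of Proposition 4: for any speed magnitude
`r > 0` and any misalignment `φ ∈ (−π/2, π/2)`, there exist gains
`k_P, k_I > 0` making the Jacobian of the reduced closed loop Hurwitz; in
particular any gains satisfying the two explicit bounds work. -/
theorem jacobian_hurwitz_for_small_gains
    (r ω₀ φ : ℝ) (hr : 0 < r) (hω₀ : 0 < ω₀)
    (hφ : φ ∈ Set.Ioo (-(π / 2)) (π / 2))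
    (J : ℝ → ℝ → Matrix (Fin 3) (Fin 3) ℂ)
    (hJ : ∀ kP kI : ℝ, J kP kI =
      !![(↑(-kP * (r * Real.cos φ)) : ℂ), ↑ω₀, ↑(kI * (r * Real.cos φ) / ω₀);
         ↑(-kP * (r * Real.sin φ) - ω₀), 0, ↑(kI * (r * Real.sin φ) / ω₀);
         ↑(kP * ω₀), 0, ↑(-kI)]) :
    (∃ kP > (0 : ℝ), ∃ kI > (0 : ℝ), ∀ μ ∈ spectrum ℂ (J kP kI), μ.re < 0) ∧
    (∀ kP kI : ℝ, 0 < kP → 0 < kI →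
      ω₀ > kP * r * |Real.sin φ| →
      ω₀ * Real.cos φ > kI * |Real.sin φ| + r * kP * |Real.sin φ * Real.cos φ| →
      ∀ μ ∈ spectrum ℂ (J kP kI), μ.re < 0) := by
  have hc : 0 < Real.cos φ := Real.cos_pos_of_mem_Ioo hφ
  have hs1 : |Real.sin φ| < 1 := by
    have h := Real.sin_sq_add_cos_sq φ
    have : Real.sin φ ^ 2 < 1 := by nlinarith
    exact (sq_lt_one_iff_abs_lt_one _).mp this
  -- main part: the explicit bounds imply Hurwitz
  have main : ∀ kP kI : ℝ, 0 < kP → 0 < kI →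
      ω₀ > kP * r * |Real.sin φ| →
      ω₀ * Real.cos φ > kI * |Real.sin φ| + r * kP * |Real.sin φ * Real.cos φ| →
      ∀ μ ∈ spectrum ℂ (J kP kI), μ.re < 0 := by
    intro kP kI hkP hkI hb1 hb2 μ hμ
    -- from spectrum: det (μ • 1 - J) = 0
    have hdet : ((μ • (1 : Matrix (Fin 3) (Fin 3) ℂ)) - J kP kI).det = 0 := by
      rw [spectrum.mem_iff] at hμ
      by_contra hd
      apply hμ
      rw [Matrix.isUnit_iff_isUnit_det]
      have : (algebraMap ℂ (Matrix (Fin 3) (Fin 3) ℂ)) μ = μ • 1 := by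
        simp [Algebra.algebraMap_eq_smul_one]
      rw [this]
      exact isUnit_iff_ne_zero.mpr hd
    rw [hJ] at hdet
    -- expand determinant to the cubic characteristic equation
    set c := Real.cos φ
    set s := Real.sin φ
    have hchar : μ ^ 3 + ((kP * r * c + kI : ℝ) : ℂ) * μ ^ 2
        + ((ω₀ ^ 2 + kP * r * s * ω₀ : ℝ) : ℂ) * μ + ((kI * ω₀ ^ 2 : ℝ) : ℂ) = 0 := by
      have hω₀' : (ω₀ : ℂ) ≠ 0 := by exact_mod_cast hω₀.ne'
      have h1 : ((μ • (1 : Matrix (Fin 3) (Fin 3) ℂ)) -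
          !![(↑(-kP * (r * c)) : ℂ), ↑ω₀, ↑(kI * (r * c) / ω₀);
             ↑(-kP * (r * s) - ω₀), 0, ↑(kI * (r * s) / ω₀);
             ↑(kP * ω₀), 0, ↑(-kI)]).det
          = μ ^ 3 + ((kP * r * c + kI : ℝ) : ℂ) * μ ^ 2
            + ((ω₀ ^ 2 + kP * r * s * ω₀ : ℝ) : ℂ) * μ + ((kI * ω₀ ^ 2 : ℝ) : ℂ) := by
        rw [Matrix.det_fin_three]
        push_cast
        simp [Matrix.smul_apply, Matrix.one_apply, Matrix.vecHead, Matrix.vecTail]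
        field_simp
        ring
      rw [h1] at hdet
      exact hdet
    -- Routh–Hurwitz conditions
    have habs1 : kP * r * s ≤ kP * r * |s| := by
      have h1 : s ≤ |s| := le_abs_self s
      nlinarith [mul_pos hkP hr]
    have habs1' : -(kP * r * s) ≤ kP * r * |s| := by
      have h1 : -s ≤ |s| := neg_le_abs s
      nlinarith [mul_pos hkP hr]
    have habs2 : -(kI * s + r * kP * (s * c)) ≤ kI * |s| + r * kP * |s * c| := by
      have h1 : -s ≤ |s| := neg_le_abs s
      have h2 : -(s * c) ≤ |s * c| := neg_le_abs _
      nlinarith [mul_pos hr hkP, hkI.le]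
    apply cubic_root_re_neg (kP * r * c + kI) (ω₀ ^ 2 + kP * r * s * ω₀) (kI * ω₀ ^ 2)
      _ _ _ _ μ hchar
    · positivity
    · have hq' : 0 < ω₀ + kP * r * s := by linarith
      nlinarith [mul_pos hω₀ hq']
    · positivity
    · -- p*q - t = kP r ω₀ (c ω₀ + kP r c s + kI s) > 0
      have key : 0 < c * ω₀ + kP * r * (c * s) + kI * s := by nlinarith
      nlinarith [mul_pos (mul_pos hkP hr) hω₀, mul_pos (mul_pos (mul_pos hkP hr) hω₀) key]
  refine ⟨?_, main⟩
  -- existence: pick explicit small gains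
  have habs0 : (0:ℝ) ≤ |Real.sin φ| := abs_nonneg _
  have hk2 : 0 < ω₀ * Real.cos φ * (1 - |Real.sin φ|) / 2 := by
    apply div_pos _ (by norm_num)
    exact mul_pos (mul_pos hω₀ hc) (by linarith)
  refine ⟨ω₀ / (2 * r), by positivity, ω₀ * Real.cos φ * (1 - |Real.sin φ|) / 2, hk2, ?_⟩
  apply main
  · positivity
  · exact hk2
  · have h1 : ω₀ / (2 * r) * r = ω₀ / 2 := by field_simp
    rw [h1]
    nlinarith
  · have habs : |Real.sin φ * Real.cos φ| = |Real.sin φ| * Real.cos φ := by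
      rw [abs_mul, abs_of_pos hc]
    rw [habs]
    have h1 : r * (ω₀ / (2 * r)) = ω₀ / 2 := by field_simp
    rw [h1]
    nlinarith [mul_pos hω₀ hc, sq_nonneg (1 - |Real.sin φ|),
      mul_nonneg (mul_pos hω₀ hc).le (sq_nonneg (1 - |Real.sin φ|))]
end
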